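/- arXiv:2202.12849 — 2 statements merged into one kernel-verified Lean document; each statement's English description precedes it below -/
import Mathlib

section
/- Let E be an environment, Sem : V → Set(W) a fixed 'true semantics', and depth δ : W → ℕ. Suppose g is a generation function such that: (soundness) whenever A is a sound assignment (A(y) ⊆ Sem(y) for all y), the values produced by g from A lie in the true semantics; and (generativity) whenever A is i-witnessed (every variable y with a witness of depth ≤ i in Sem(y) satisfies A(y) ≠ ∅) and Sem(y) contains a value of depth ≤ i+1, then g applied to y and A produces at least one value. Then by induction, the assignment A^i obtained after i passes of the bottom-up algorithm (with A⁰ = empty, A^{i}(y) = g(E(y), A^{i-1}) when A^{i-1}(y) = ∅) is both sound and i-witnessed for every i. -/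
namespace BottomUp

variable {V W : Type*} (Sem : V → Set W) (δ : W → ℕ)

def IsSound (A : V → Set W) : Prop :=
  ∀ y, A y ⊆ Sem y

def IsWitnessed (i : ℕ) (A : V → Set W) : Prop :=
  ∀ y, (∃ w ∈ Sem y, δ w ≤ i) → A y ≠ ∅

variable {Sem δ}

theorem isSound_empty : IsSound Sem fun _ => (∅ : Set W) :=
  fun _ => Set.empty_subset _

theorem isWitnessed_zero_empty (hδ : ∀ w, 1 ≤ δ w) :
    IsWitnessed Sem δ 0 fun _ => (∅ : Set W) := by
  rintro y ⟨w, -, hw⟩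
  exact absurd (hδ w) (by omega)

section Step

variable {g : V → Set W} {A A' : V → Set W}

theorem IsSound.step (hempty : ∀ y, A y = ∅ → A' y = g y) (hkeep : ∀ y, A y ≠ ∅ → A' y = A y)
    (hA : IsSound Sem A) (hg : ∀ y, g y ⊆ Sem y) : IsSound Sem A' := by
  intro y
  by_cases h : A y = ∅
  · rw [hempty y h]; exact hg y
  · rw [hkeep y h]; exact hA y

theorem IsWitnessed.step (hempty : ∀ y, A y = ∅ → A' y = g y)
    (hkeep : ∀ y, A y ≠ ∅ → A' y = A y) {i : ℕ} (hg : ∀ y, (∃ w ∈ Sem y, δ w ≤ i + 1) → g y ≠ ∅) :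
    IsWitnessed Sem δ (i + 1) A' := by
  intro y hy
  by_cases h : A y = ∅
  · rw [hempty y h]; exact hg y hy
  · rw [hkeep y h]; exact h

end Step

end BottomUp

open BottomUp in
theorem bottomup_sound_and_witnessed_general
    (V : Type) (W : Type) (δ : W → ℕ) (hδ : ∀ w, 1 ≤ δ w)
    (Sem : V → Set W)
    (g : V → (V → Set W) → Set W)
    -- soundness of g
    (hsound : ∀ A : V → Set W, (∀ y, A y ⊆ Sem y) → ∀ y, g y A ⊆ Sem y)
    -- generativity of g
    (hgen : ∀ (A : V → Set W) (i : ℕ),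
      (∀ y, (∃ w ∈ Sem y, δ w ≤ i) → A y ≠ ∅) →
      ∀ y, (∃ w ∈ Sem y, δ w ≤ i + 1) → g y A ≠ ∅)
    -- the bottom-up iteration
    (A : ℕ → V → Set W)
    (hA0 : ∀ y, A 0 y = ∅)
    (hstep_empty : ∀ i y, A i y = ∅ → A (i + 1) y = g y (A i))
    (hstep_nonempty : ∀ i y, A i y ≠ ∅ → A (i + 1) y = A i y) :
    ∀ i : ℕ, (∀ y, A i y ⊆ Sem y) ∧ (∀ y, (∃ w ∈ Sem y, δ w ≤ i) → A i y ≠ ∅) := by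
  intro i
  induction i with
  | zero =>
    have hA0' : A 0 = fun _ => ∅ := funext hA0
    exact hA0' ▸ ⟨isSound_empty, isWitnessed_zero_empty hδ⟩
  | succ i ih =>
    obtain ⟨hsound_i, hwit_i⟩ := ih
    exact ⟨IsSound.step (hstep_empty i) (hstep_nonempty i) hsound_i (hsound _ hsound_i),
      IsWitnessed.step (hstep_empty i) (hstep_nonempty i) (hgen _ i hwit_i)⟩

theorem bottomup_sound_and_witnessed
    (V : Type) [Finite V] (W : Type) (δ : W → ℕ) (hδ : ∀ w, 1 ≤ δ w)
    (Sem : V → Set W)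
    (g : V → (V → Set W) → Set W)
    -- soundness of g
    (hsound : ∀ A : V → Set W, (∀ y, A y ⊆ Sem y) → ∀ y, g y A ⊆ Sem y)
    -- generativity of g
    (hgen : ∀ (A : V → Set W) (i : ℕ),
      (∀ y, (∃ w ∈ Sem y, δ w ≤ i) → A y ≠ ∅) →
      ∀ y, (∃ w ∈ Sem y, δ w ≤ i + 1) → g y A ≠ ∅)
    -- the bottom-up iteration
    (A : ℕ → V → Set W)
    (hA0 : ∀ y, A 0 y = ∅)
    (hstep_empty : ∀ i y, A i y = ∅ → A (i + 1) y = g y (A i))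
    (hstep_nonempty : ∀ i y, A i y ≠ ∅ → A (i + 1) y = A i y) :
    ∀ i : ℕ, (∀ y, A i y ⊆ Sem y) ∧ (∀ y, (∃ w ∈ Sem y, δ w ≤ i) → A i y ≠ ∅) :=
  bottomup_sound_and_witnessed_general V W δ hδ Sem g hsound hgen A hA0 hstep_empty hstep_nonempty
end

section
/- Under the hypotheses of the previous invariant (g sound and generative), if the bottom-up algorithm terminates with 'unsatisfiable' after a useless pass j (i.e., A^j = A^{j-1}), then for every variable y: A^j(y) = ∅ implies Sem(y) = ∅. -/
/-!
Once a pass changes nothing, the iteration is stationary, so `A (j + 1) = A (j + n)` for every `n`.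
On the other hand, by induction on `i` using generativity, every variable with a witness of depth
at most `i` has a nonempty `A i` (there is nothing to check at `i = 0` since depths are positive).
A witness `w ∈ Sem y` would therefore make `A (j + δ w) y = A (j + 1) y` nonempty.
-/

open Classical in
noncomputable def bottomUpStep {V W : Type} (g : V → (V → Set W) → Set W) (B : V → Set W) :
    V → Set W :=
  fun y => if B y = ∅ then g y B else B y

theorem eq_add_of_succ_eq_of_recursion {α : Type*} {F : α → α} {a : ℕ → α}
    (ha : ∀ i, a (i + 1) = F (a i)) {j : ℕ} (hj : a (j + 1) = a j) (n : ℕ) : a (j + n) = a j := by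
  induction n with
  | zero => rfl
  | succ n ih => rw [← add_assoc, ha, ih, ← ha, hj]

section BottomUp

variable {V W : Type} {g : V → (V → Set W) → Set W} {A : ℕ → V → Set W}

theorem succ_eq_bottomUpStep (hstep_empty : ∀ i y, A i y = ∅ → A (i + 1) y = g y (A i))
    (hstep_nonempty : ∀ i y, A i y ≠ ∅ → A (i + 1) y = A i y) (i : ℕ) :
    A (i + 1) = bottomUpStep g (A i) := by
  funext y
  by_cases h : A i y = ∅
  · simp only [bottomUpStep, if_pos h, hstep_empty i y h]
  · simp only [bottomUpStep, if_neg h, hstep_nonempty i y h]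

theorem bottomUpStep_ne_empty {B : V → Set W} {y : V} (h : B y = ∅ → g y B ≠ ∅) :
    bottomUpStep g B y ≠ ∅ := by
  unfold bottomUpStep
  split_ifs with hB
  exacts [h hB, hB]

theorem ne_empty_of_exists_depth_le {δ : W → ℕ} (hδ : ∀ w, 1 ≤ δ w) {Sem : V → Set W}
    (hgen : ∀ (A : V → Set W) (i : ℕ),
      (∀ y, (∃ w ∈ Sem y, δ w ≤ i) → A y ≠ ∅) →
      ∀ y, (∃ w ∈ Sem y, δ w ≤ i + 1) → g y A ≠ ∅)
    (hA : ∀ i, A (i + 1) = bottomUpStep g (A i)) :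
    ∀ i y, (∃ w ∈ Sem y, δ w ≤ i) → A i y ≠ ∅ := by
  intro i
  induction i with
  | zero =>
    rintro y ⟨w, -, hw⟩
    exact absurd (hδ w) (by omega)
  | succ i ih =>
    intro y hy
    rw [hA]
    exact bottomUpStep_ne_empty fun _ => hgen (A i) i ih y hy

end BottomUp

theorem bottomup_useless_pass_unsat_general
    (V : Type) (W : Type) (δ : W → ℕ) (hδ : ∀ w, 1 ≤ δ w)
    (Sem : V → Set W)
    (g : V → (V → Set W) → Set W)
    -- generativity of g
    (hgen : ∀ (A : V → Set W) (i : ℕ),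
      (∀ y, (∃ w ∈ Sem y, δ w ≤ i) → A y ≠ ∅) →
      ∀ y, (∃ w ∈ Sem y, δ w ≤ i + 1) → g y A ≠ ∅)
    -- the bottom-up iteration
    (A : ℕ → V → Set W)
    (hstep_empty : ∀ i y, A i y = ∅ → A (i + 1) y = g y (A i))
    (hstep_nonempty : ∀ i y, A i y ≠ ∅ → A (i + 1) y = A i y)
    -- pass j+1 is useless
    (j : ℕ) (huseless : A (j + 1) = A j) :
    ∀ y, A (j + 1) y = ∅ → Sem y = ∅ := by
  have hA := succ_eq_bottomUpStep hstep_empty hstep_nonempty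
  intro y hAy
  by_contra hSem
  obtain ⟨w, hw⟩ := Set.nonempty_iff_ne_empty.mpr hSem
  have hne : A (j + δ w) y ≠ ∅ :=
    ne_empty_of_exists_depth_le hδ hgen hA _ y ⟨w, hw, Nat.le_add_left _ _⟩
  rw [eq_add_of_succ_eq_of_recursion hA huseless, ← huseless] at hne
  exact hne hAy

theorem bottomup_useless_pass_unsat
    (V : Type) [Finite V] (W : Type) (δ : W → ℕ) (hδ : ∀ w, 1 ≤ δ w)
    (Sem : V → Set W)
    (g : V → (V → Set W) → Set W)
    -- soundness of g
    (hsound : ∀ A : V → Set W, (∀ y, A y ⊆ Sem y) → ∀ y, g y A ⊆ Sem y)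
    -- generativity of g
    (hgen : ∀ (A : V → Set W) (i : ℕ),
      (∀ y, (∃ w ∈ Sem y, δ w ≤ i) → A y ≠ ∅) →
      ∀ y, (∃ w ∈ Sem y, δ w ≤ i + 1) → g y A ≠ ∅)
    -- the bottom-up iteration
    (A : ℕ → V → Set W)
    (hA0 : ∀ y, A 0 y = ∅)
    (hstep_empty : ∀ i y, A i y = ∅ → A (i + 1) y = g y (A i))
    (hstep_nonempty : ∀ i y, A i y ≠ ∅ → A (i + 1) y = A i y)
    -- pass j+1 is useless
    (j : ℕ) (huseless : A (j + 1) = A j) :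
    ∀ y, A (j + 1) y = ∅ → Sem y = ∅ :=
  bottomup_useless_pass_unsat_general V W δ hδ Sem g hgen A hstep_empty hstep_nonempty j huseless
end
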